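/- Let d ≥ 1 and b ≥ 1 be integers, let 𝔉 = {1,…,b}^d, and let G be an arbitrary subset of 𝔉. Let the interior surface ∂̇G be the set of points of G having an L1-neighbour (a point at L1-distance exactly 1) in 𝔉 \ G, and the exterior surface ∂G the set of points of 𝔉 \ G having an L1-neighbour in G. Consider the bipartite graph with parts ∂̇G and ∂G in which u ∈ ∂̇G is joined to v ∈ ∂G whenever ‖u − v‖₁ = 1. Then this bipartite graph contains a matching M with |M| ≥ |∂G|/(4d − 1). -/

import Mathlib

/-!
Every point of `∂G` has an `L¹`-neighbour in `G`, and a lattice point has only `2d`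
`L¹`-neighbours. Matching greedily a point of `∂G` with a neighbour `t ∈ G` and then discarding
the other neighbours of `t` therefore uses up at most `2d` points of `∂G` per edge, so the
resulting matching satisfies `|∂G| ≤ 2d |M| ≤ (4d - 1) |M|`.
-/

namespace Surface

/-- The discrete grid `{1,…,b}^d ⊂ ℤ^d`. -/
def grid (d b : ℕ) : Set (Fin d → ℤ) := {p | ∀ i, 1 ≤ p i ∧ p i ≤ (b : ℤ)}

/-- The `L¹` distance on `ℤ^d`. -/
def l1 {d : ℕ} (p q : Fin d → ℤ) : ℤ := ∑ i, |p i - q i|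

/-- The exterior surface `∂G` of `G` inside the grid `{1,…,b}^d`: points of the grid
outside `G` at `L¹`-distance exactly `1` from some point of `G`. -/
def extSurf (d b : ℕ) (G : Set (Fin d → ℤ)) : Set (Fin d → ℤ) :=
  {v | v ∈ grid d b ∧ v ∉ G ∧ ∃ u ∈ G, l1 u v = 1}

/-- The interior surface `∂̇G` of `G` inside the grid `{1,…,b}^d`: points of `G` at
`L¹`-distance exactly `1` from some point of the grid outside `G`. -/
def intSurf (d b : ℕ) (G : Set (Fin d → ℤ)) : Set (Fin d → ℤ) :=
  {u | u ∈ G ∧ ∃ v ∈ grid d b, v ∉ G ∧ l1 u v = 1}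

end Surface

namespace Surface

open Finset

section Matching

variable {α β : Type*}

def IsMatching (M : Set (α × β)) : Prop :=
  ∀ e ∈ M, ∀ e' ∈ M, e ≠ e' → e.1 ≠ e'.1 ∧ e.2 ≠ e'.2

lemma IsMatching.insert {M : Set (α × β)} {a : α × β} (hM : IsMatching M)
    (ha : ∀ e ∈ M, a.1 ≠ e.1 ∧ a.2 ≠ e.2) : IsMatching (insert a M) := by
  rintro e (rfl | he) e' (rfl | he') hne
  · exact absurd rfl hne
  · exact ha e' he'
  · exact (ha e he).imp Ne.symm Ne.symm
  · exact hM e he e' he' hne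

theorem exists_isMatching_card_le_mul [DecidableEq α] [DecidableEq β] (r : α → β → Prop)
    [DecidableRel r] (k : ℕ) (S : Finset β)
    (hdeg : ∀ t, #{s ∈ S | r t s} ≤ k) (hcov : ∀ s ∈ S, ∃ t, r t s) :
    ∃ M : Finset (α × β), (∀ e ∈ M, r e.1 e.2 ∧ e.2 ∈ S) ∧ IsMatching (M : Set (α × β)) ∧
      #S ≤ k * #M := by
  induction S using Finset.strongInduction with | _ S ih =>
  rcases S.eq_empty_or_nonempty with rfl | ⟨s₀, hs₀⟩
  · exact ⟨∅, by simp, by simp [IsMatching], by simp⟩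
  obtain ⟨t₀, ht₀⟩ := hcov s₀ hs₀
  -- Match `s₀` to `t₀`, discard every other neighbour of `t₀`, and recurse.
  set S' := S.filter (fun s => ¬ r t₀ s)
  have hS'S : S' ⊆ S := filter_subset _ _
  obtain ⟨M', hM'r, hM', hcard'⟩ := ih S' (filter_ssubset.mpr ⟨s₀, hs₀, not_not.mpr ht₀⟩)
    (fun t => (card_le_card (monotone_filter_left _ hS'S)).trans (hdeg t))
    (fun s hs => hcov s (hS'S hs))
  have hfresh : ∀ e ∈ M', t₀ ≠ e.1 ∧ s₀ ≠ e.2 := by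
    intro e he
    have hne : ¬ r t₀ e.2 := (mem_filter.mp (hM'r e he).2).2
    exact ⟨fun h => hne (h ▸ (hM'r e he).1), fun h => hne (h ▸ ht₀)⟩
  have hnotin : (t₀, s₀) ∉ M' := fun h => (hfresh _ h).1 rfl
  refine ⟨insert (t₀, s₀) M', ?_, ?_, ?_⟩
  · simp only [mem_insert, forall_eq_or_imp]
    exact ⟨⟨ht₀, hs₀⟩, fun e he => ⟨(hM'r e he).1, hS'S (hM'r e he).2⟩⟩
  · rw [coe_insert]
    exact hM'.insert hfresh
  · calc #S = #{s ∈ S | r t₀ s} + #S' := (card_filter_add_card_filter_not _).symm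
      _ ≤ k + k * #M' := add_le_add (hdeg t₀) hcard'
      _ = k * #(insert (t₀, s₀) M') := by rw [card_insert_of_notMem hnotin]; ring

end Matching

lemma grid_finite (d b : ℕ) : (grid d b).Finite :=
  (Set.finite_Icc (fun _ => (1 : ℤ)) (fun _ => (b : ℤ))).subset
    fun _ hp => ⟨fun i => (hp i).1, fun i => (hp i).2⟩

lemma eq_update_of_l1_eq_one {d : ℕ} {u v : Fin d → ℤ} (h : l1 u v = 1) :
    ∃ i, ∃ ε ∈ ({-1, 1} : Finset ℤ), v = Function.update u i (u i + ε) := by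
  unfold l1 at h
  obtain ⟨i, hi⟩ : ∃ i, u i ≠ v i := by
    by_contra! hc
    simp [hc] at h
  have hsplit := add_sum_erase univ (fun j => |u j - v j|) (mem_univ i)
  have hi_pos : 0 < |u i - v i| := abs_pos.mpr (sub_ne_zero.mpr hi)
  have hrest_nonneg : 0 ≤ ∑ j ∈ univ.erase i, |u j - v j| := sum_nonneg fun j _ => abs_nonneg _
  have hrest : ∀ j ∈ univ.erase i, |u j - v j| = 0 :=
    (sum_eq_zero_iff_of_nonneg fun j _ => abs_nonneg _).mp (by omega)
  have hi_one : |u i - v i| = 1 := by omega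
  refine ⟨i, v i - u i, ?_, ?_⟩
  · rcases abs_eq zero_le_one |>.mp hi_one with h' | h' <;> simp <;> omega
  · funext j
    by_cases hj : j = i
    · subst hj; simp
    · rw [Function.update_of_ne hj]
      have := hrest j (mem_erase.mpr ⟨hj, mem_univ j⟩)
      rw [abs_eq_zero, sub_eq_zero] at this
      exact this.symm

lemma card_filter_l1_eq_one_le {d : ℕ} (t : Fin d → ℤ) (S : Finset (Fin d → ℤ)) :
    #{s ∈ S | l1 t s = 1} ≤ 2 * d := by
  calc #{s ∈ S | l1 t s = 1}
      ≤ #((univ ×ˢ ({-1, 1} : Finset ℤ)).image fun p => Function.update t p.1 (t p.1 + p.2)) := by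
        refine card_le_card fun s hs => ?_
        obtain ⟨i, ε, hε, rfl⟩ := eq_update_of_l1_eq_one (mem_filter.mp hs).2
        exact mem_image.mpr ⟨(i, ε), mem_product.mpr ⟨mem_univ i, hε⟩, rfl⟩
    _ ≤ #(univ ×ˢ ({-1, 1} : Finset ℤ)) := card_image_le
    _ = 2 * d := by simp [mul_comm]

/-- Lemma 32 of the paper.
For any `G ⊆ {1,…,b}^d`, the bipartite graph between the interior surface `∂̇G` and
the exterior surface `∂G`, with edges given by pairs at `L¹`-distance `1`, contains a
matching `M` with `|M| ≥ |∂G|/(4d - 1)`. -/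
theorem statement17 :
    ∀ d b : ℕ, 1 ≤ d → 1 ≤ b → ∀ G : Set (Fin d → ℤ), G ⊆ grid d b →
      ∃ M : Set ((Fin d → ℤ) × (Fin d → ℤ)), M.Finite ∧
        (∀ e ∈ M, e.1 ∈ intSurf d b G ∧ e.2 ∈ extSurf d b G ∧ l1 e.1 e.2 = 1) ∧
        (∀ e ∈ M, ∀ e' ∈ M, e ≠ e' → e.1 ≠ e'.1 ∧ e.2 ≠ e'.2) ∧
        ((extSurf d b G).ncard : ℝ) ≤ (4 * (d : ℝ) - 1) * (M.ncard : ℝ) := by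
  classical
  intro d b hd _ G _
  have hfin : (extSurf d b G).Finite := (grid_finite d b).subset fun _ hv => hv.1
  obtain ⟨M, hMr, hM, hcard⟩ := exists_isMatching_card_le_mul
    (fun u v => u ∈ G ∧ l1 u v = 1) (2 * d) hfin.toFinset
    (fun t => (card_le_card (monotone_filter_right _ fun _ _ h => h.2)).trans
      (card_filter_l1_eq_one_le t _))
    (fun v hv => by obtain ⟨-, -, u, hu, huv⟩ := hfin.mem_toFinset.mp hv; exact ⟨u, hu, huv⟩)
  refine ⟨M, M.finite_toSet, fun e he => ?_, hM, ?_⟩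
  · obtain ⟨⟨hG, hl1⟩, hext⟩ := hMr e he
    rw [hfin.mem_toFinset] at hext
    exact ⟨⟨hG, e.2, hext.1, hext.2.1, hl1⟩, hext, hl1⟩
  · rw [Set.ncard_eq_toFinset_card _ hfin, Set.ncard_coe_finset]
    have hd' : (1 : ℝ) ≤ d := by exact_mod_cast hd
    have hcard' : (#hfin.toFinset : ℝ) ≤ 2 * d * #M := by exact_mod_cast hcard
    nlinarith [Nat.cast_nonneg (α := ℝ) #M]

end Surface
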